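/- arXiv:1307.3204 — 7 statements merged into one kernel-verified Lean document; each statement's English description precedes it below -/
import Mathlib

section
/- Let f : ℂ → ℂ^d be analytic on the open unit disc, extend continuously to 1, map the disc into the open unit ball, and satisfy ‖f(1)‖ = 1. Then for all z in the open unit disc, (1 - |⟨f(z), f(1)⟩|)/(1 - |z|) ≥ (1 - |a|)/(1 + |a|) > 0, where a = ⟨f(0), f(1)⟩. -/
/-!
By Cauchy–Schwarz, `g z = ⟨f z, f 1⟩` maps the unit disc into itself, so the Schwarz–Pick
lemma gives `|g z| ≤ (|a| + |z|) / (1 + |a| |z|)` with `a = g 0`, i.e.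
`1 - |g z| ≥ (1 - |a|)(1 - |z|) / (1 + |a| |z|) ≥ (1 - |a|)(1 - |z|) / (1 + |a|)`.
Schwarz–Pick itself is the Schwarz lemma for `φ_a ∘ g`, where `φ_a w = (a - w) / (1 - ā w)` is
the involutive disc automorphism exchanging `a` and `0`.
-/

open Metric ComplexConjugate

noncomputable def mobius (a w : ℂ) : ℂ := (a - w) / (1 - conj a * w)

theorem one_sub_conj_mul_ne_zero {a w : ℂ} (h : ‖a‖ * ‖w‖ < 1) : 1 - conj a * w ≠ 0 := by
  rw [sub_ne_zero, ne_comm]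
  intro h1
  have : ‖conj a * w‖ = 1 := by rw [h1, norm_one]
  rw [norm_mul, Complex.norm_conj] at this
  linarith

theorem mobius_mobius {a w : ℂ} (ha : ‖a‖ ≠ 1) (hw : 1 - conj a * w ≠ 0) :
    mobius a (mobius a w) = w := by
  have hne : 1 - conj a * a ≠ 0 := by
    rw [mul_comm, Complex.mul_conj, Complex.normSq_eq_norm_sq, sub_ne_zero, ne_comm]
    exact_mod_cast (pow_eq_one_iff_of_nonneg (norm_nonneg a) two_ne_zero).not.mpr ha
  unfold mobius
  generalize conj a = c at *
  have hden : 1 - c * ((a - w) / (1 - c * w)) = (1 - c * a) / (1 - c * w) := by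
    field_simp; ring
  rw [hden, div_div_eq_mul_div, sub_div' hw, div_mul_cancel₀ _ hw, div_eq_iff hne]
  ring

theorem sq_norm_one_sub_conj_mul_sub_sq_norm_sub (a w : ℂ) :
    ‖1 - conj a * w‖ ^ 2 - ‖a - w‖ ^ 2 = (1 - ‖a‖ ^ 2) * (1 - ‖w‖ ^ 2) := by
  simp only [← Complex.normSq_eq_norm_sq, Complex.normSq_apply, Complex.sub_re, Complex.sub_im,
    Complex.mul_re, Complex.mul_im, Complex.one_re, Complex.one_im, Complex.conj_re,
    Complex.conj_im]
  ring

theorem norm_mobius_lt_one {a w : ℂ} (ha : ‖a‖ < 1) (hw : ‖w‖ < 1) : ‖mobius a w‖ < 1 := by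
  have hD : 0 < ‖1 - conj a * w‖ :=
    norm_pos_iff.mpr (one_sub_conj_mul_ne_zero (mul_lt_one_of_nonneg_of_lt_one_left
      (norm_nonneg a) ha hw.le))
  have hid := sq_norm_one_sub_conj_mul_sub_sq_norm_sub a w
  have hP : 0 < (1 - ‖a‖ ^ 2) * (1 - ‖w‖ ^ 2) := by
    have := norm_nonneg a; have := norm_nonneg w
    apply mul_pos <;> nlinarith
  rw [mobius, norm_div, div_lt_one hD]
  exact lt_of_pow_lt_pow_left₀ 2 hD.le (by linarith)

theorem norm_mobius_le {a w : ℂ} (ha : ‖a‖ < 1) (hw : ‖w‖ < 1) :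
    ‖mobius a w‖ ≤ (‖a‖ + ‖w‖) / (1 + ‖a‖ * ‖w‖) := by
  have hD : 0 < ‖1 - conj a * w‖ :=
    norm_pos_iff.mpr (one_sub_conj_mul_ne_zero (mul_lt_one_of_nonneg_of_lt_one_left
      (norm_nonneg a) ha hw.le))
  have hD_le : ‖1 - conj a * w‖ ≤ 1 + ‖a‖ * ‖w‖ := by
    simpa using norm_sub_le (1 : ℂ) (conj a * w)
  have hid := sq_norm_one_sub_conj_mul_sub_sq_norm_sub a w
  have hP : 0 ≤ (1 - ‖a‖ ^ 2) * (1 - ‖w‖ ^ 2) := by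
    have := norm_nonneg a; have := norm_nonneg w
    apply mul_nonneg <;> nlinarith
  have hD_sq : ‖1 - conj a * w‖ ^ 2 ≤ (1 + ‖a‖ * ‖w‖) ^ 2 := pow_le_pow_left₀ hD.le hD_le 2
  rw [mobius, norm_div, div_le_div_iff₀ hD (by positivity)]
  refine (pow_le_pow_iff_left₀ (by positivity) (by positivity) two_ne_zero).mp ?_
  -- the gap between the two squares is `(1 - ‖a‖²)(1 - ‖w‖²)((1 + ‖a‖‖w‖)² - D²)`
  nlinarith [mul_nonneg hP (sub_nonneg.mpr hD_sq)]

theorem differentiableOn_mobius {a : ℂ} (ha : ‖a‖ ≤ 1) :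
    DifferentiableOn ℂ (mobius a) (ball 0 1) := by
  intro w hw
  have hw : ‖w‖ < 1 := mem_ball_zero_iff.mp hw
  refine ((differentiableAt_const a).sub differentiableAt_id).div
    ((differentiableAt_const 1).sub (differentiableAt_id.const_mul _))
    (one_sub_conj_mul_ne_zero ?_) |>.differentiableWithinAt
  nlinarith [norm_nonneg a, norm_nonneg w]

theorem add_div_one_add_mul_le {α r ρ : ℝ} (hα₀ : 0 ≤ α) (hα₁ : α ≤ 1) (hr : 0 ≤ r)
    (hrρ : r ≤ ρ) :
    (α + r) / (1 + α * r) ≤ (α + ρ) / (1 + α * ρ) := by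
  rw [div_le_div_iff₀ (by positivity) (by nlinarith)]
  nlinarith [mul_nonneg (mul_nonneg hα₀ (sub_nonneg.mpr hα₁)) (sub_nonneg.mpr hrρ)]

theorem Complex.norm_le_add_div_one_add_mul_of_mapsTo_ball {g : ℂ → ℂ}
    (hd : DifferentiableOn ℂ g (ball 0 1)) (h_maps : Set.MapsTo g (ball 0 1) (ball 0 1)) {z : ℂ}
    (hz : ‖z‖ < 1) :
    ‖g z‖ ≤ (‖g 0‖ + ‖z‖) / (1 + ‖g 0‖ * ‖z‖) := by
  set a := g 0
  have hg : ∀ {w}, ‖w‖ < 1 → ‖g w‖ < 1 := fun hw =>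
    mem_ball_zero_iff.mp (h_maps (mem_ball_zero_iff.mpr hw))
  have ha : ‖a‖ < 1 := hg (by simp)
  have hh_maps : Set.MapsTo (mobius a ∘ g) (ball 0 1) (closedBall 0 1) := fun w hw =>
    mem_closedBall_zero_iff.mpr (norm_mobius_lt_one ha (hg (mem_ball_zero_iff.mp hw))).le
  have hh_schwarz : ‖mobius a (g z)‖ ≤ ‖z‖ :=
    Complex.norm_le_norm_of_mapsTo_ball ((differentiableOn_mobius ha.le).comp hd h_maps)
      hh_maps (by simp [a, mobius]) hz
  have hgz : mobius a (mobius a (g z)) = g z :=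
    mobius_mobius ha.ne (one_sub_conj_mul_ne_zero (by
      nlinarith [norm_nonneg a, norm_nonneg (g z), hg hz]))
  calc ‖g z‖ = ‖mobius a (mobius a (g z))‖ := by rw [hgz]
    _ ≤ (‖a‖ + ‖mobius a (g z)‖) / (1 + ‖a‖ * ‖mobius a (g z)‖) :=
        norm_mobius_le ha (norm_mobius_lt_one ha (hg hz))
    _ ≤ (‖a‖ + ‖z‖) / (1 + ‖a‖ * ‖z‖) :=
        add_div_one_add_mul_le (norm_nonneg a) ha.le (norm_nonneg _) hh_schwarz

theorem one_sub_div_one_add_le_of_le {α ρ s : ℝ} (hα₀ : 0 ≤ α) (hα₁ : α < 1) (hρ₀ : 0 ≤ ρ)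
    (hρ₁ : ρ < 1) (hs : s ≤ (α + ρ) / (1 + α * ρ)) :
    (1 - α) / (1 + α) ≤ (1 - s) / (1 - ρ) := by
  calc (1 - α) / (1 + α) ≤ (1 - α) / (1 + α * ρ) := by
        gcongr
        exact mul_le_of_le_one_right hα₀ hρ₁.le
    _ = (1 - (α + ρ) / (1 + α * ρ)) / (1 - ρ) := by
        field_simp [(sub_pos.mpr hρ₁).ne']
        ring
    _ ≤ (1 - s) / (1 - ρ) := by gcongr

/-- The paper's `⟨f z, f 1⟩` (linear in the first slot) is Mathlib's `inner ℂ (f 1) (f z)`. -/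
theorem stmt0_general (d : ℕ) (f : ℂ → EuclideanSpace ℂ (Fin d))
    (hf : DifferentiableOn ℂ f (ball 0 1))
    (hmap : ∀ z ∈ ball (0 : ℂ) 1, ‖f z‖ < 1)
    (hf1 : ‖f 1‖ = 1) :
    ∀ z ∈ ball (0 : ℂ) 1,
      0 < (1 - ‖(inner ℂ (f 1) (f 0) : ℂ)‖) /
            (1 + ‖(inner ℂ (f 1) (f 0) : ℂ)‖) ∧
      (1 - ‖(inner ℂ (f 1) (f 0) : ℂ)‖) /
            (1 + ‖(inner ℂ (f 1) (f 0) : ℂ)‖) ≤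
        (1 - ‖(inner ℂ (f 1) (f z) : ℂ)‖) / (1 - ‖z‖) := by
  intro z hz
  set g : ℂ → ℂ := fun w => inner ℂ (f 1) (f w)
  have hg_maps : Set.MapsTo g (ball 0 1) (ball 0 1) := fun w hw =>
    mem_ball_zero_iff.mpr <| (norm_inner_le_norm _ _).trans_lt <| by
      rw [hf1, one_mul]; exact hmap w hw
  have hg0 : ‖g 0‖ < 1 := mem_ball_zero_iff.mp (hg_maps (mem_ball_self one_pos))
  have hz : ‖z‖ < 1 := mem_ball_zero_iff.mp hz
  have hpick : ‖g z‖ ≤ (‖g 0‖ + ‖z‖) / (1 + ‖g 0‖ * ‖z‖) :=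
    Complex.norm_le_add_div_one_add_mul_of_mapsTo_ball
      ((innerSL ℂ (f 1)).differentiable.comp_differentiableOn hf) hg_maps hz
  exact ⟨div_pos (by linarith) (by positivity),
    one_sub_div_one_add_le_of_le (norm_nonneg _) hg0 (norm_nonneg _) hz hpick⟩

/-- Schwarz–Pick type bound for an analytic disc in the ball of ℂ^d
that extends continuously to 1 with ‖f 1‖ = 1. Here the paper's ⟨f z, f 1⟩
(linear in the first slot) is Mathlib's `inner (f 1) (f z)`. -/
theorem stmt0 (d : ℕ) (f : ℂ → EuclideanSpace ℂ (Fin d))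
    (hf : DifferentiableOn ℂ f (ball 0 1))
    (hcont : ContinuousWithinAt f (insert (1 : ℂ) (ball 0 1)) 1)
    (hmap : ∀ z ∈ ball (0 : ℂ) 1, ‖f z‖ < 1)
    (hf1 : ‖f 1‖ = 1) :
    ∀ z ∈ ball (0 : ℂ) 1,
      0 < (1 - ‖(inner ℂ (f 1) (f 0) : ℂ)‖) /
            (1 + ‖(inner ℂ (f 1) (f 0) : ℂ)‖) ∧
      (1 - ‖(inner ℂ (f 1) (f 0) : ℂ)‖) /
            (1 + ‖(inner ℂ (f 1) (f 0) : ℂ)‖) ≤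
        (1 - ‖(inner ℂ (f 1) (f z) : ℂ)‖) / (1 - ‖z‖) :=
  stmt0_general d f hf hmap hf1
end

section
/- Let f : 𝔻 → B_d be a proper analytic map of the open unit disc into the open unit ball of ℂ^d which extends to be continuously differentiable on the closed disc. Then for every z on the unit circle, Re⟨f(z), f'(z)·z⟩ > 0; in particular ⟨f(z), f'(z)⟩ ≠ 0, i.e., f meets the boundary sphere transversally. -/
open Metric Set Filter Topology ComplexConjugate

/-!
At a boundary point `z`, properness and continuity force `‖f z‖ = 1`, so `φ w = ⟨f w, f z⟩` is a
holomorphic self-map of the disc with `φ z = 1`. Schwarz's lemma for `φ` composed with the disc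
automorphism moving `φ 0` to `0` gives `1 - |φ (t z)| ≥ c (1 - t)` for some `c > 0` along the
radius, so the radial derivative `Re (z φ'(z)) = Re⟨f(z), z f'(z)⟩` at `t = 1` is at least `c`.
-/

lemma le_of_hasDerivWithinAt_Iio {g : ℝ → ℝ} {g' c x : ℝ}
    (hg : HasDerivWithinAt g g' (Iio x) x)
    (hle : ∀ᶠ t in 𝓝[<] x, g t ≤ g x - c * (x - t)) : c ≤ g' := by
  have hslope := hasDerivWithinAt_iff_tendsto_slope.1 hg
  rw [sdiff_singleton_eq_self (s := Iio x) (lt_irrefl x)] at hslope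
  refine ge_of_tendsto hslope ?_
  filter_upwards [hle, self_mem_nhdsWithin] with t hgt (ht : t < x)
  rw [slope_def_field, le_div_iff_of_neg (sub_neg.2 ht)]
  linarith

lemma norm_eq_one_of_proper {E : Type*} [NormedAddCommGroup E] {f : ℂ → E} {z : ℂ}
    (hf : ContinuousWithinAt f (ball 0 1) z) (hmap : ∀ w ∈ ball (0 : ℂ) 1, ‖f w‖ < 1)
    (hproper : ∀ ε : ℝ, 0 < ε → ∃ r : ℝ, r < 1 ∧
      ∀ w ∈ ball (0 : ℂ) 1, r < ‖w‖ → 1 - ε < ‖f w‖)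
    (hz : ‖z‖ = 1) : ‖f z‖ = 1 := by
  have : (𝓝[ball (0 : ℂ) 1] z).NeBot := mem_closure_iff_nhdsWithin_neBot.1 <| by
    rw [closure_ball 0 one_ne_zero, mem_closedBall_zero_iff, hz]
  have hlim : Tendsto (fun w => ‖f w‖) (𝓝[ball (0 : ℂ) 1] z) (𝓝 ‖f z‖) := hf.tendsto.norm
  refine le_antisymm (le_of_tendsto hlim ?_) (le_of_forall_sub_le fun ε hε => ?_)
  · filter_upwards [self_mem_nhdsWithin] with w hw using (hmap w hw).le
  · obtain ⟨r, hr, hfr⟩ := hproper ε hε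
    have hnear : ∀ᶠ w in 𝓝[ball (0 : ℂ) 1] z, r < ‖w‖ :=
      nhdsWithin_le_nhds <|
        continuousAt_const.eventually_lt continuous_norm.continuousAt (hz.symm ▸ hr)
    refine ge_of_tendsto hlim ?_
    filter_upwards [self_mem_nhdsWithin, hnear] with w hw hrw using (hfr w hw hrw).le

namespace Complex

lemma sq_norm_one_sub_conj_mul_sub_sq_norm_sub (a u : ℂ) :
    ‖1 - conj a * u‖ ^ 2 - ‖u - a‖ ^ 2 = (1 - ‖a‖ ^ 2) * (1 - ‖u‖ ^ 2) := by
  simp only [Complex.sq_norm, normSq_apply, sub_re, sub_im, mul_re, mul_im, conj_re, conj_im,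
    one_re, one_im]
  ring

lemma one_sub_norm_le_norm_one_sub_conj_mul {a u : ℂ} (hu : ‖u‖ ≤ 1) :
    1 - ‖a‖ ≤ ‖1 - conj a * u‖ := by
  have : ‖conj a * u‖ ≤ ‖a‖ := by
    rw [norm_mul, norm_conj]; exact mul_le_of_le_one_right (norm_nonneg a) hu
  linarith [norm_sub_norm_le (1 : ℂ) (conj a * u), norm_one (α := ℂ)]

noncomputable def blaschkeFactor (a u : ℂ) : ℂ := (u - a) / (1 - conj a * u)

lemma norm_blaschkeFactor_lt_one {a u : ℂ} (ha : ‖a‖ < 1) (hu : ‖u‖ < 1) :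
    ‖blaschkeFactor a u‖ < 1 := by
  have hden : 0 < ‖1 - conj a * u‖ :=
    (sub_pos.2 ha).trans_le (one_sub_norm_le_norm_one_sub_conj_mul hu.le)
  rw [blaschkeFactor, norm_div, div_lt_one hden]
  have := sq_norm_one_sub_conj_mul_sub_sq_norm_sub a u
  have : 0 < (1 - ‖a‖ ^ 2) * (1 - ‖u‖ ^ 2) := by
    apply mul_pos <;> nlinarith [norm_nonneg a, norm_nonneg u]
  nlinarith [norm_nonneg (u - a)]

lemma blaschkeFactor_self (a : ℂ) : blaschkeFactor a a = 0 := by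
  simp [blaschkeFactor]

lemma one_sub_norm_mul_one_sub_sq_norm_le_of_mapsTo_ball {φ : ℂ → ℂ}
    (hd : DifferentiableOn ℂ φ (ball 0 1)) (hm : MapsTo φ (ball 0 1) (ball 0 1)) {w : ℂ}
    (hw : ‖w‖ < 1) :
    (1 - ‖φ 0‖) * (1 - ‖w‖ ^ 2) ≤ (1 + ‖φ 0‖) * (1 - ‖φ w‖ ^ 2) := by
  set a := φ 0
  have hφ : ∀ u ∈ ball (0 : ℂ) 1, ‖φ u‖ < 1 := fun u hu => mem_ball_zero_iff.1 (hm hu)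
  have ha : ‖a‖ < 1 := hφ 0 (mem_ball_self one_pos)
  have hφw : ‖φ w‖ < 1 := hφ w (mem_ball_zero_iff.2 hw)
  have hden : 1 - ‖a‖ ≤ ‖1 - conj a * φ w‖ := one_sub_norm_le_norm_one_sub_conj_mul hφw.le
  have hschwarz : ‖blaschkeFactor a (φ w)‖ ≤ ‖w‖ := by
    refine norm_le_norm_of_mapsTo_ball (f := fun u => blaschkeFactor a (φ u)) ?_
      (fun u hu => ?_) (blaschkeFactor_self a) hw
    · refine (hd.sub_const a).div ((differentiableOn_const _).sub
        ((differentiableOn_const _).mul hd)) fun u hu => ?_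
      exact norm_pos_iff.1 ((sub_pos.2 ha).trans_le
        (one_sub_norm_le_norm_one_sub_conj_mul (hφ u hu).le))
    · exact ball_subset_closedBall (mem_ball_zero_iff.2 (norm_blaschkeFactor_lt_one ha (hφ u hu)))
  have hnum : ‖φ w - a‖ ≤ ‖w‖ * ‖1 - conj a * φ w‖ := by
    rwa [blaschkeFactor, norm_div, div_le_iff₀ ((sub_pos.2 ha).trans_le hden)] at hschwarz
  -- with `u = φ w`: `(1 - |a|²)(1 - |u|²) = |1 - ā u|² - |u - a|²`
  -- `≥ (1 - |w|²) |1 - ā u|² ≥ (1 - |w|²)(1 - |a|)²`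
  have key : (1 - ‖a‖) * ((1 - ‖a‖) * (1 - ‖w‖ ^ 2)) ≤
      (1 - ‖a‖) * ((1 + ‖a‖) * (1 - ‖φ w‖ ^ 2)) := by
    have hsq : ‖φ w - a‖ ^ 2 ≤ ‖w‖ ^ 2 * ‖1 - conj a * φ w‖ ^ 2 := by
      rw [← mul_pow]; exact pow_le_pow_left₀ (norm_nonneg _) hnum 2
    have hden2 : (1 - ‖a‖) ^ 2 ≤ ‖1 - conj a * φ w‖ ^ 2 :=
      pow_le_pow_left₀ (by linarith) hden 2
    have hw2 : 0 ≤ 1 - ‖w‖ ^ 2 := by nlinarith [norm_nonneg w]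
    nlinarith [sq_norm_one_sub_conj_mul_sub_sq_norm_sub a (φ w),
      mul_le_mul_of_nonneg_right hden2 hw2]
  exact le_of_mul_le_mul_left key (sub_pos.2 ha)

theorem re_mul_pos_of_hasDerivWithinAt_of_mapsTo_ball {φ : ℂ → ℂ} {z D : ℂ}
    (hd : DifferentiableOn ℂ φ (ball 0 1)) (hm : MapsTo φ (ball 0 1) (ball 0 1))
    (hz : ‖z‖ = 1) (hφz : φ z = 1) (hD : HasDerivWithinAt φ D (ball 0 1) z) :
    0 < (z * D).re := by
  set k := (1 - ‖φ 0‖) / (1 + ‖φ 0‖)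
  have hk : 0 < k := by
    have : ‖φ 0‖ < 1 := mem_ball_zero_iff.1 (hm (mem_ball_self one_pos))
    exact div_pos (by linarith) (by linarith [norm_nonneg (φ 0)])
  have hnorm_radius : ∀ t : ℝ, 0 ≤ t → ‖(t : ℂ) * z‖ = t := fun t ht => by
    rw [norm_mul, hz, mul_one, norm_real, Real.norm_of_nonneg ht]
  have hradius : MapsTo (fun t : ℝ => (t : ℂ) * z) (Ioo 0 1) (ball 0 1) := fun t ht => by
    rw [mem_ball_zero_iff, hnorm_radius t ht.1.le]; exact ht.2
  have hderiv : HasDerivWithinAt (fun t : ℝ => (φ ((t : ℂ) * z)).re) (z * D).re (Iio 1) 1 := by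
    have hline : HasDerivWithinAt (fun t : ℝ => (t : ℂ) * z) z (Ioo 0 1) 1 := by
      simpa using ((hasDerivAt_id (1 : ℝ)).ofReal_comp.mul_const z).hasDerivWithinAt
    have hcomp := hD.scomp_of_eq 1 hline hradius (by simp)
    rw [smul_eq_mul] at hcomp
    exact (reCLM.hasFDerivAt.comp_hasDerivWithinAt 1 hcomp).mono_of_mem_nhdsWithin
      (Ioo_mem_nhdsLT one_pos)
  refine (half_pos hk).trans_le (le_of_hasDerivWithinAt_Iio hderiv ?_)
  filter_upwards [Ioo_mem_nhdsLT one_pos] with t ht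
  have hpick := one_sub_norm_mul_one_sub_sq_norm_le_of_mapsTo_ball hd hm
    (mem_ball_zero_iff.1 (hradius ht))
  rw [hnorm_radius t ht.1.le, ← div_le_iff₀' (by linarith [norm_nonneg (φ 0)]),
    mul_div_right_comm] at hpick
  set u := φ ((t : ℂ) * z)
  have hu : ‖u‖ < 1 := mem_ball_zero_iff.1 (hm (hradius ht))
  simp only [ofReal_one, one_mul, hφz, one_re]
  nlinarith [re_le_norm u, ht.1, ht.2, norm_nonneg u, mul_pos hk ht.1]

end Complex

/-- The paper's `⟨u, v⟩`, linear in `u`, is `inner ℂ v u`. -/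
theorem stmt2_general (d : ℕ) (f f' : ℂ → EuclideanSpace ℂ (Fin d))
    (hderiv : ∀ z ∈ closedBall (0 : ℂ) 1, HasDerivWithinAt f (f' z) (closedBall 0 1) z)
    (hmap : ∀ z ∈ ball (0 : ℂ) 1, ‖f z‖ < 1)
    (hproper : ∀ ε : ℝ, 0 < ε → ∃ r : ℝ, r < 1 ∧
      ∀ z ∈ ball (0 : ℂ) 1, r < ‖z‖ → 1 - ε < ‖f z‖) :
    ∀ z : ℂ, ‖z‖ = 1 →
      0 < (inner ℂ (z • f' z) (f z) : ℂ).re ∧ (inner ℂ (f' z) (f z) : ℂ) ≠ 0 := by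
  intro z hz
  have hzS : z ∈ closedBall (0 : ℂ) 1 := mem_closedBall_zero_iff.2 hz.le
  have hfz : ‖f z‖ = 1 := norm_eq_one_of_proper
    ((hderiv z hzS).continuousWithinAt.mono ball_subset_closedBall) hmap hproper hz
  have hpos : 0 < (z * inner ℂ (f z) (f' z)).re := by
    refine Complex.re_mul_pos_of_hasDerivWithinAt_of_mapsTo_ball
      (φ := fun w => inner ℂ (f z) (f w)) ?_ (fun w hw => ?_) hz ?_ ?_
    · exact (innerSL ℂ (f z)).differentiable.comp_differentiableOn fun w hw =>
        (hderiv w (ball_subset_closedBall hw)).differentiableWithinAt.mono ball_subset_closedBall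
    · rw [mem_ball_zero_iff]
      exact (norm_inner_le_norm _ _).trans_lt (by rw [hfz, one_mul]; exact hmap w hw)
    · simp [inner_self_eq_norm_sq_to_K, hfz]
    · exact ((innerSL ℂ (f z)).hasFDerivAt.comp_hasDerivWithinAt z (hderiv z hzS)).mono
        ball_subset_closedBall
  have hinner : inner ℂ (z • f' z) (f z) = conj (z * inner ℂ (f z) (f' z)) := by
    rw [inner_smul_left, map_mul, inner_conj_symm]
  refine ⟨by rwa [hinner, Complex.conj_re], fun h => hpos.ne' ?_⟩
  rw [← Complex.conj_re, ← hinner, inner_smul_left, h, mul_zero, Complex.zero_re]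

/-- a proper analytic map `f : 𝔻 → B_d` which is `C¹` up to the closed
disc (with complex derivative `f'`) meets the sphere transversally: for `|z| = 1`,
`Re⟨f z, f' z · z⟩ > 0` and in particular `⟨f z, f' z⟩ ≠ 0`. The paper's inner
product `⟨u, v⟩` (linear in the first slot) is Mathlib's `inner v u`. -/
theorem stmt2 (d : ℕ) (f f' : ℂ → EuclideanSpace ℂ (Fin d))
    (hderiv : ∀ z ∈ closedBall (0 : ℂ) 1, HasDerivWithinAt f (f' z) (closedBall 0 1) z)
    (hC1 : ContinuousOn f' (closedBall (0 : ℂ) 1))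
    (hmap : ∀ z ∈ ball (0 : ℂ) 1, ‖f z‖ < 1)
    (hproper : ∀ ε : ℝ, 0 < ε → ∃ r : ℝ, r < 1 ∧
      ∀ z ∈ ball (0 : ℂ) 1, r < ‖z‖ → 1 - ε < ‖f z‖) :
    ∀ z : ℂ, ‖z‖ = 1 →
      0 < (inner ℂ (z • f' z) (f z) : ℂ).re ∧ (inner ℂ (f' z) (f z) : ℂ) ≠ 0 :=
  stmt2_general d f f' hderiv hmap hproper
end

section
/- Let φ : [0,1] → B be a differentiable map into the closed unit ball of a real Hilbert space with ‖φ(1)‖ = 1 and ⟨φ'(1), φ(1)⟩ > 0. Then as x → 1, the quantities ‖φ(1) - φ(x)‖, 1 - ‖φ(x)‖, and 1 - x are pairwise comparable, i.e., each ratio tends to a finite positive limit. -/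
open Filter Set Topology
open scoped RealInnerProductSpace

/-!
All three ratios come from one-sided difference quotients at `1`: `‖φ 1 - φ x‖ / (1 - x)` is the
norm of the slope of `φ`, tending to `‖φ' 1‖`, and `(1 - ‖φ x‖) / (1 - x)` is the slope of `‖φ‖`,
which is differentiable at `1` because `φ 1 ≠ 0`, with derivative `⟪φ 1, φ' 1⟫ / ‖φ 1‖`.
Since `⟪φ' 1, φ 1⟫ > 0`, both limits are positive, and the third ratio is their quotient.
-/

section

variable {F : Type*} [NormedAddCommGroup F] [InnerProductSpace ℝ F]
  {f : ℝ → F} {f' : F} {s : Set ℝ} {a : ℝ}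

theorem HasDerivWithinAt.norm (hf : HasDerivWithinAt f f' s a) (h0 : f a ≠ 0) :
    HasDerivWithinAt (‖f ·‖) (⟪f a, f'⟫ / ‖f a‖) s a := by
  have hsq : ‖f a‖ ^ 2 ≠ 0 := pow_ne_zero 2 (norm_ne_zero_iff.2 h0)
  have := hf.norm_sq.sqrt hsq
  simp only [Real.sqrt_sq (norm_nonneg _)] at this
  convert this using 1
  field_simp

theorem HasDerivWithinAt.tendsto_norm_sub_div_sub_of_subset_Iio
    (hf : HasDerivWithinAt f f' s a) (hs : s ⊆ Iio a) :
    Tendsto (fun x => ‖f a - f x‖ / (a - x)) (𝓝[s] a) (𝓝 ‖f'‖) := by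
  refine ((hasDerivWithinAt_iff_tendsto_slope' fun ha => lt_irrefl a (hs ha)).1 hf).norm.congr' ?_
  filter_upwards [self_mem_nhdsWithin] with x hx
  have hxa : x - a < 0 := sub_neg.2 (hs hx)
  rw [slope_def_module, norm_smul, norm_inv, Real.norm_eq_abs, abs_of_neg hxa, norm_sub_rev,
    inv_mul_eq_div, neg_sub]

end

theorem HasDerivWithinAt.tendsto_sub_div_sub {g : ℝ → ℝ} {g' : ℝ} {s : Set ℝ} {a : ℝ}
    (hg : HasDerivWithinAt g g' s a) (ha : a ∉ s) :
    Tendsto (fun x => (g a - g x) / (a - x)) (𝓝[s] a) (𝓝 g') := by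
  refine ((hasDerivWithinAt_iff_tendsto_slope' ha).1 hg).congr fun x => ?_
  rw [slope_def_field, ← neg_div_neg_eq, neg_sub, neg_sub]

theorem stmt3_general {H : Type*} [NormedAddCommGroup H] [InnerProductSpace ℝ H]
    (φ φ' : ℝ → H)
    (hdiff : ∀ x ∈ Set.Icc (0 : ℝ) 1, HasDerivWithinAt φ (φ' x) (Set.Icc 0 1) x)
    (hnorm : ‖φ 1‖ = 1)
    (hpos : 0 < (inner ℝ (φ' 1) (φ 1) : ℝ)) :
    ∃ c₁ c₂ c₃ : ℝ, 0 < c₁ ∧ 0 < c₂ ∧ 0 < c₃ ∧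
      Tendsto (fun x => ‖φ 1 - φ x‖ / (1 - x)) (nhdsWithin 1 (Set.Ico 0 1)) (nhds c₁) ∧
      Tendsto (fun x => (1 - ‖φ x‖) / (1 - x)) (nhdsWithin 1 (Set.Ico 0 1)) (nhds c₂) ∧
      Tendsto (fun x => (1 - ‖φ x‖) / ‖φ 1 - φ x‖) (nhdsWithin 1 (Set.Ico 0 1)) (nhds c₃) := by
  have hs : Ico (0 : ℝ) 1 ⊆ Iio 1 := fun x hx => hx.2
  have hφ : HasDerivWithinAt φ (φ' 1) (Ico 0 1) 1 :=
    (hdiff 1 ⟨zero_le_one, le_rfl⟩).mono Ico_subset_Icc_self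
  have hφ1 : φ 1 ≠ 0 := norm_ne_zero_iff.1 (by rw [hnorm]; exact one_ne_zero)
  have hφ'1 : 0 < ‖φ' 1‖ := norm_pos_iff.2 fun h => by simp [h] at hpos
  have h₁ := hφ.tendsto_norm_sub_div_sub_of_subset_Iio hs
  have h₂ := (hφ.norm hφ1).tendsto_sub_div_sub fun h => lt_irrefl 1 h.2
  rw [hnorm, div_one, real_inner_comm] at h₂
  refine ⟨_, _, _, hφ'1, hpos, div_pos hpos hφ'1, h₁, h₂, (h₂.div h₁ hφ'1.ne').congr' ?_⟩
  filter_upwards [self_mem_nhdsWithin] with x hx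
  exact div_div_div_cancel_right₀ (sub_ne_zero.2 (hs hx).ne') _ _

/-- for a differentiable map `φ : [0,1] → B` into the closed unit ball
of a real Hilbert space with `‖φ 1‖ = 1` and `⟨φ' 1, φ 1⟩ > 0`, the quantities
`‖φ 1 - φ x‖`, `1 - ‖φ x‖` and `1 - x` are pairwise comparable as `x → 1⁻`:
each ratio tends to a finite positive limit. -/
theorem stmt3 {H : Type*} [NormedAddCommGroup H] [InnerProductSpace ℝ H]
    (φ φ' : ℝ → H)
    (hdiff : ∀ x ∈ Set.Icc (0 : ℝ) 1, HasDerivWithinAt φ (φ' x) (Set.Icc 0 1) x)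
    (hball : ∀ x ∈ Set.Icc (0 : ℝ) 1, ‖φ x‖ ≤ 1)
    (hnorm : ‖φ 1‖ = 1)
    (hpos : 0 < (inner ℝ (φ' 1) (φ 1) : ℝ)) :
    ∃ c₁ c₂ c₃ : ℝ, 0 < c₁ ∧ 0 < c₂ ∧ 0 < c₃ ∧
      Tendsto (fun x => ‖φ 1 - φ x‖ / (1 - x)) (nhdsWithin 1 (Set.Ico 0 1)) (nhds c₁) ∧
      Tendsto (fun x => (1 - ‖φ x‖) / (1 - x)) (nhdsWithin 1 (Set.Ico 0 1)) (nhds c₂) ∧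
      Tendsto (fun x => (1 - ‖φ x‖) / ‖φ 1 - φ x‖) (nhdsWithin 1 (Set.Ico 0 1)) (nhds c₃) :=
  stmt3_general φ φ' hdiff hnorm hpos
end

section
/- Let (c_n)_{n≥1} be a sequence of nonnegative real numbers and define (a_n)_{n≥0} by a_0 = 1 and a_n = Σ_{k=1}^n c_k a_{n-k} for n ≥ 1. Then a_k · a_n ≤ a_{n+k} for all k, n ≥ 0. -/
/-!
Expand `a k` by the recursion. By induction on `k`, each term `c j * a (k - j) * a n` is at most
`c j * a (n + k - j)`, and these are the first `k` terms of the recursion for `a (n + k)`; the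
remaining terms are nonnegative.
-/

open Finset

section Renewal

variable {R : Type*} [Semiring R] [PartialOrder R] [IsOrderedRing R] {c a : ℕ → R}

theorem renewal_nonneg (hc : ∀ n, 0 ≤ c n) (ha0 : a 0 = 1)
    (ha : ∀ n, 1 ≤ n → a n = ∑ k ∈ Icc 1 n, c k * a (n - k)) (n : ℕ) : 0 ≤ a n := by
  induction n using Nat.strong_induction_on with
  | _ n ih =>
    rcases Nat.eq_zero_or_pos n with rfl | hn
    · exact ha0 ▸ zero_le_one
    · rw [ha n hn]
      refine sum_nonneg fun j hj => mul_nonneg (hc j) (ih (n - j) ?_)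
      grind

theorem sum_Icc_le_renewal (hc : ∀ n, 0 ≤ c n) (ha0 : a 0 = 1)
    (ha : ∀ n, 1 ≤ n → a n = ∑ k ∈ Icc 1 n, c k * a (n - k)) {j m : ℕ} (hm : 1 ≤ m)
    (hj : j ≤ m) : ∑ i ∈ Icc 1 j, c i * a (m - i) ≤ a m := by
  rw [ha m hm]
  exact sum_le_sum_of_subset_of_nonneg (Icc_subset_Icc_right hj)
    fun i _ _ => mul_nonneg (hc i) (renewal_nonneg hc ha0 ha _)

theorem renewal_supermul (hc : ∀ n, 0 ≤ c n) (ha0 : a 0 = 1)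
    (ha : ∀ n, 1 ≤ n → a n = ∑ k ∈ Icc 1 n, c k * a (n - k)) (k n : ℕ) :
    a k * a n ≤ a (n + k) := by
  induction k using Nat.strong_induction_on generalizing n with
  | _ k ih =>
    rcases Nat.eq_zero_or_pos k with rfl | hk
    · simp [ha0]
    · have step : ∀ j ∈ Icc 1 k, c j * a (k - j) * a n ≤ c j * a (n + k - j) := by
        intro j hj
        have hjk : j ≤ k := (mem_Icc.mp hj).2
        rw [mul_assoc, show n + k - j = n + (k - j) by omega]
        exact mul_le_mul_of_nonneg_left (ih (k - j) (by grind) n) (hc j)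
      calc a k * a n = ∑ j ∈ Icc 1 k, c j * a (k - j) * a n := by rw [ha k hk, sum_mul]
        _ ≤ ∑ j ∈ Icc 1 k, c j * a (n + k - j) := sum_le_sum step
        _ ≤ a (n + k) := sum_Icc_le_renewal hc ha0 ha (by omega) (by omega)

end Renewal

/-- for the renewal-type recursion `a 0 = 1`,
`a n = ∑_{k=1}^n c k * a (n-k)` with `c k ≥ 0`, one has `a k * a n ≤ a (n+k)`. -/
theorem stmt4 (c a : ℕ → ℝ) (hc : ∀ n, 0 ≤ c n) (ha0 : a 0 = 1)
    (ha : ∀ n, 1 ≤ n → a n = ∑ k ∈ Finset.Icc 1 n, c k * a (n - k)) :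
    ∀ k n : ℕ, a k * a n ≤ a (n + k) :=
  renewal_supermul hc ha0 ha
end

section
/- Let (b_n) ∈ ℓ² with b_1 ≠ 0 and ‖(b_n)‖_2 ≤ 1, and define f : 𝔻 → ℓ² by f(z) = (b_1 z, b_2 z², b_3 z³, ...). Then f is injective, holomorphic, and its image V = f(𝔻) equals the intersection of the zero sets of the polynomials p_n(z) = b_n z_1^n - b_1^n z_n, n ≥ 2, with the set {z ∈ ℓ² : |z_1| < |b_1|} (equivalently, with the open ball when ‖(b_n)‖_2 = 1). -/
/-! The first coordinate recovers the parameter, `z = w 1 / b 1`, which gives injectivity, and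
once `z` is known the relations `b n * w 1 ^ n = b 1 ^ n * w n` say exactly that
`w n = b n * z ^ n`. For holomorphy, `f z = ∑ b n z ^ n eₙ` in `ℓ²`, and on `ball 0 r`, `r < 1`,
the terms are bounded by `(sup ‖b n‖) rⁿ`, so the sum is holomorphic by Weierstrass' theorem. -/

open Metric

open scoped ENNReal

theorem norm_le_sqrt_tsum_sq {ι E : Type*} [SeminormedAddGroup E] {b : ι → E}
    (hb : Summable fun i => ‖b i‖ ^ 2) (i : ι) : ‖b i‖ ≤ √(∑' k, ‖b k‖ ^ 2) :=
  Real.le_sqrt_of_sq_le (hb.le_tsum i fun k _ => by positivity)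

section PowerSeriesInLp

variable {p : ℝ≥0∞} [Fact (1 ≤ p)]

theorem differentiableOn_tsum_single_mul_pow {a : ℕ → ℂ} {C : ℝ} (ha : ∀ n, ‖a n‖ ≤ C)
    {r : ℝ} (hr0 : 0 ≤ r) (hr1 : r < 1) :
    DifferentiableOn ℂ
      (fun z : ℂ => ∑' n, lp.single (E := fun _ : ℕ => ℂ) p n (a n * z ^ n)) (ball 0 r) := by
  refine Complex.differentiableOn_tsum_of_summable_norm
    ((summable_geometric_of_lt_one hr0 hr1).mul_left C) (fun n => ?_) isOpen_ball
    (fun n z hz => ?_)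
  · simp_rw [← lp.singleContinuousLinearMap_apply (𝕜 := ℂ)]
    fun_prop
  · have hz : ‖z‖ ≤ r := (mem_ball_zero_iff.mp hz).le
    have hC : 0 ≤ C := (norm_nonneg _).trans (ha 0)
    rw [lp.norm_single (zero_lt_one.trans_le Fact.out), norm_mul, norm_pow]
    gcongr
    exact ha n

theorem differentiableOn_ball_of_apply_eq_mul_pow (hp : p ≠ ⊤) {a : ℕ → ℂ} {C : ℝ}
    (ha : ∀ n, ‖a n‖ ≤ C) {f : ℂ → lp (fun _ : ℕ => ℂ) p}
    (hf : ∀ z ∈ ball (0 : ℂ) 1, ∀ n, f z n = a n * z ^ n) :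
    DifferentiableOn ℂ f (ball 0 1) := by
  intro z₀ hz₀
  obtain ⟨r, hz₀r, hr1⟩ := exists_between (mem_ball_zero_iff.mp hz₀)
  have hf_eq : ∀ z ∈ ball (0 : ℂ) 1,
      f z = ∑' n, lp.single (E := fun _ : ℕ => ℂ) p n (a n * z ^ n) := fun z hz => by
    simp_rw [← hf z hz]
    exact (lp.hasSum_single hp (f z)).tsum_eq.symm
  have hg := differentiableOn_tsum_single_mul_pow (p := p) ha ((norm_nonneg z₀).trans hz₀r.le) hr1
  have hg_at := hg.differentiableAt (isOpen_ball.mem_nhds (mem_ball_zero_iff.mpr hz₀r))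
  refine (hg_at.congr_of_eventuallyEq ?_).differentiableWithinAt
  filter_upwards [isOpen_ball.mem_nhds hz₀] using hf_eq

end PowerSeriesInLp

theorem relations_iff_eq_mul_div_pow {b w : ℕ → ℂ} (hb0 : b 0 = 0) (hb1 : b 1 ≠ 0) :
    (w 0 = 0 ∧ ∀ n, 2 ≤ n → b n * w 1 ^ n = b 1 ^ n * w n) ↔
      ∀ n, w n = b n * (w 1 / b 1) ^ n := by
  constructor
  · rintro ⟨hw0, hw⟩ (_ | _ | n)
    · simp [hw0, hb0]
    · simp only [zero_add, pow_one]
      field_simp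
    · rw [div_pow, mul_div_assoc', eq_div_iff (pow_ne_zero _ hb1)]
      linear_combination -hw (n + 1 + 1) (by omega)
  · intro hw
    refine ⟨by simp [hw 0, hb0], fun n _ => ?_⟩
    rw [hw n, div_pow]
    field_simp

section ImageInLp

variable {p : ℝ≥0∞} {b : ℕ → ℂ} {f : ℂ → lp (fun _ : ℕ => ℂ) p}

theorem leftInvOn_div_apply_one (hb1 : b 1 ≠ 0)
    (hf : ∀ z ∈ ball (0 : ℂ) 1, ∀ n, f z n = b n * z ^ n) :
    Set.LeftInvOn (fun w : lp (fun _ : ℕ => ℂ) p => w 1 / b 1) f (ball 0 1) := fun z hz => by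
  simp only [hf z hz 1, pow_one]
  field_simp

theorem image_ball_eq_setOf_relations (hb0 : b 0 = 0) (hb1 : b 1 ≠ 0)
    (hf : ∀ z ∈ ball (0 : ℂ) 1, ∀ n, f z n = b n * z ^ n) :
    f '' ball 0 1 =
      {w | w 0 = 0 ∧ (∀ n, 2 ≤ n → b n * w 1 ^ n = b 1 ^ n * w n) ∧ ‖w 1‖ < ‖b 1‖} := by
  have hb1' : 0 < ‖b 1‖ := norm_pos_iff.mpr hb1
  ext w
  simp only [Set.mem_ofPred_eq, ← and_assoc, relations_iff_eq_mul_div_pow hb0 hb1]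
  constructor
  · rintro ⟨z, hz, rfl⟩
    have hz_eq : f z 1 / b 1 = z := leftInvOn_div_apply_one hb1 hf hz
    refine ⟨fun n => by rw [hf z hz n, hz_eq], ?_⟩
    rw [hf z hz 1, pow_one, norm_mul]
    exact mul_lt_of_lt_one_right hb1' (mem_ball_zero_iff.mp hz)
  · rintro ⟨hw, hw1⟩
    have hz : w 1 / b 1 ∈ ball (0 : ℂ) 1 := by
      rwa [mem_ball_zero_iff, norm_div, div_lt_one hb1']
    exact ⟨_, hz, lp.ext (funext fun n => (hf _ hz n).trans (hw n).symm)⟩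

end ImageInLp

theorem stmt9_general (b : ℕ → ℂ) (hb0 : b 0 = 0) (hb1 : b 1 ≠ 0)
    (hb2 : Summable (fun n => ‖b n‖ ^ 2))
    (f : ℂ → lp (fun _ : ℕ => ℂ) 2)
    (hf : ∀ z ∈ ball (0 : ℂ) 1, ∀ n, f z n = b n * z ^ n) :
    Set.InjOn f (ball 0 1) ∧
    DifferentiableOn ℂ f (ball 0 1) ∧
    f '' (ball 0 1) =
      {w : lp (fun _ : ℕ => ℂ) 2 |
        w 0 = 0 ∧ (∀ n, 2 ≤ n → b n * (w 1) ^ n = (b 1) ^ n * w n) ∧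
        ‖w 1‖ < ‖b 1‖} :=
  ⟨(leftInvOn_div_apply_one hb1 hf).injOn,
    differentiableOn_ball_of_apply_eq_mul_pow (by simp) (norm_le_sqrt_tsum_sq hb2) hf,
    image_ball_eq_setOf_relations hb0 hb1 hf⟩

/-- for `(b n) ∈ ℓ²` with `b 1 ≠ 0`, `‖b‖₂ ≤ 1` (indexed from 1 by
setting `b 0 = 0`), the map `f z = (b 1 z, b 2 z², …)` into `ℓ²` is injective and
holomorphic on the disc, and its image is the intersection of the zero sets of
the polynomials `b n z₁ⁿ - b 1ⁿ z_n` (`n ≥ 2`, together with `z₀ = 0`) with the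
set `{|z₁| < |b 1|}`. -/
theorem stmt9 (b : ℕ → ℂ) (hb0 : b 0 = 0) (hb1 : b 1 ≠ 0)
    (hb2 : Summable (fun n => ‖b n‖ ^ 2)) (hbn : ∑' n, ‖b n‖ ^ 2 ≤ 1)
    (f : ℂ → lp (fun _ : ℕ => ℂ) 2)
    (hf : ∀ z ∈ ball (0 : ℂ) 1, ∀ n, f z n = b n * z ^ n) :
    Set.InjOn f (ball 0 1) ∧
    DifferentiableOn ℂ f (ball 0 1) ∧
    f '' (ball 0 1) =
      {w : lp (fun _ : ℕ => ℂ) 2 |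
        w 0 = 0 ∧ (∀ n, 2 ≤ n → b n * (w 1) ^ n = (b 1) ^ n * w n) ∧
        ‖w 1‖ < ‖b 1‖} :=
  stmt9_general b hb0 hb1 hb2 f hf
end

section
/- Let (b_n) ∈ ℓ² with b_1 ≠ 0, ‖(b_n)‖_2 = r < 1, such that the power series Σ |b_n|² z^n has radius of convergence 1. Define f(z) = (b_1 z, b_2 z², ...) for z in the closed unit disc. Then f(closed 𝔻) equals the full common zero locus in ℓ² of the polynomials {b_n z_1^n - b_1^n z_n : n ≥ 2}; in particular this zero locus is a compact subset of the open ball of ℓ². -/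
open Metric Filter Topology

/-! Write `f z = (b n zⁿ)ₙ`. Then `‖f z‖² = ∑ |b n|² |z|²ⁿ`, which for `|z| ≤ 1` is at most
`‖f 1‖² = ∑ |b n|² = r²`; the same coordinatewise domination `|b n zⁿ| ≤ |b n|` gives continuity
of `f` by dominated convergence, hence compactness of the image. Conversely, the equations force
a point `w` of the zero locus to be `(b n zⁿ)ₙ` with `z = w₁ / b₁`, and `‖w‖² = ∑ |b n|² |z|²ⁿ < ∞`
gives `|z| ≤ 1` because the radius of convergence is `1`. -/

namespace lp

variable {ι : Type*} {E : ι → Type*} [∀ i, NormedAddCommGroup (E i)]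

theorem hasSum_norm_sq (w : lp E 2) : HasSum (fun i => ‖w i‖ ^ 2) (‖w‖ ^ 2) := by
  simpa using hasSum_norm (p := 2) (by norm_num) w

theorem continuousOn_of_norm_apply_le {X : Type*} [TopologicalSpace X] {p : ENNReal}
    [Fact (1 ≤ p)] (hp : p ≠ ⊤) {F : X → lp E p} {s : Set X} {g : ι → ℝ} (hg : Memℓp g p)
    (hF : ∀ i, ContinuousOn (fun x => F x i) s) (hFg : ∀ x ∈ s, ∀ i, ‖F x i‖ ≤ g i) :
    ContinuousOn F s := by
  intro x₀ hx₀
  set q := p.toReal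
  have hq : 0 < q := ENNReal.toReal_pos (zero_lt_one.trans_le Fact.out).ne' hp
  have hdist : Tendsto (fun x => ‖F x - F x₀‖ ^ q) (𝓝[s] x₀) (𝓝 0) := by
    have hnorm (x : X) : ‖F x - F x₀‖ ^ q = ∑' i, ‖F x i - F x₀ i‖ ^ q := norm_rpow_eq_tsum hq _
    simp only [hnorm]
    have hterm (i : ι) : Tendsto (fun x => ‖F x i - F x₀ i‖ ^ q) (𝓝[s] x₀) (𝓝 0) := by
      have hcont : ContinuousWithinAt (fun x => ‖F x i - F x₀ i‖ ^ q) s x₀ :=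
        ((hF i x₀ hx₀).sub continuousWithinAt_const).norm.rpow_const (Or.inr hq.le)
      simpa [Real.zero_rpow hq.ne'] using hcont.tendsto
    have hbound : ∀ᶠ x in 𝓝[s] x₀, ∀ i, ‖‖F x i - F x₀ i‖ ^ q‖ ≤ 2 ^ q * ‖g i‖ ^ q := by
      filter_upwards [self_mem_nhdsWithin] with x hx i
      rw [Real.norm_of_nonneg (by positivity), ← Real.mul_rpow zero_le_two (norm_nonneg _)]
      refine Real.rpow_le_rpow (norm_nonneg _) ?_ hq.le
      linarith [norm_sub_le (F x i) (F x₀ i), hFg x hx i, hFg x₀ hx₀ i, Real.le_norm_self (g i)]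
    simpa using tendsto_tsum_of_dominated_convergence
      ((hg.summable hq).mul_left (2 ^ q)) hterm hbound
  rw [ContinuousWithinAt, tendsto_iff_norm_sub_tendsto_zero]
  simpa [Real.rpow_rpow_inv (norm_nonneg _) hq.ne', Real.zero_rpow (inv_ne_zero hq.ne')] using
    hdist.rpow_const (p := q⁻¹) (Or.inr (inv_nonneg.2 hq.le))

end lp

section WeightedPowers

variable {𝕜 : Type*} [NormedDivisionRing 𝕜] {b : ℕ → 𝕜}

theorem hasSum_norm_sq_of_apply_eq_mul_pow {w : lp (fun _ : ℕ => 𝕜) 2} {z : 𝕜}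
    (hw : ∀ n, w n = b n * z ^ n) :
    HasSum (fun n => ‖b n‖ ^ 2 * (‖z‖ ^ 2) ^ n) (‖w‖ ^ 2) := by
  convert lp.hasSum_norm_sq w using 2 with n
  rw [hw, norm_mul, norm_pow, mul_pow, ← pow_mul, ← pow_mul, mul_comm n]

theorem norm_le_of_apply_eq_mul_pow {v w : lp (fun _ : ℕ => 𝕜) 2} {z : 𝕜}
    (hv : ∀ n, v n = b n) (hw : ∀ n, w n = b n * z ^ n) (hz : ‖z‖ ≤ 1) : ‖w‖ ≤ ‖v‖ := by
  have hv' : ∀ n, v n = b n * 1 ^ n := by simpa using hv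
  have hsq : ‖w‖ ^ 2 ≤ ‖v‖ ^ 2 := by
    refine hasSum_le (fun n => ?_) (hasSum_norm_sq_of_apply_eq_mul_pow hw)
      (hasSum_norm_sq_of_apply_eq_mul_pow hv')
    gcongr
    simpa using hz
  exact (pow_le_pow_iff_left₀ (norm_nonneg _) (norm_nonneg _) two_ne_zero).1 hsq

theorem norm_le_one_of_apply_eq_mul_pow
    (hrad : ∀ x : ℝ, 1 < x → ¬ Summable (fun n => ‖b n‖ ^ 2 * x ^ n))
    {w : lp (fun _ : ℕ => 𝕜) 2} {z : 𝕜} (hw : ∀ n, w n = b n * z ^ n) : ‖z‖ ≤ 1 := by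
  have hz : ‖z‖ ^ 2 ≤ 1 := not_lt.1 fun h =>
    hrad _ h (hasSum_norm_sq_of_apply_eq_mul_pow hw).summable
  simpa using hz

end WeightedPowers

theorem eq_mul_div_pow_of_mul_pow_eq {K : Type*} [Field K] {b w : ℕ → K} (hb0 : b 0 = 0)
    (hb1 : b 1 ≠ 0) (hw0 : w 0 = 0) (hw : ∀ n, 2 ≤ n → b n * w 1 ^ n = b 1 ^ n * w n) (n : ℕ) :
    w n = b n * (w 1 / b 1) ^ n := by
  match n with
  | 0 => simp [hb0, hw0]
  | 1 => field_simp
  | n + 2 =>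
    rw [div_pow, mul_div_assoc', eq_div_iff (pow_ne_zero _ hb1), hw _ le_add_self]
    ring

section ClosedDisc

variable {𝕜 : Type*} [NormedField 𝕜] {b : ℕ → 𝕜} {f : 𝕜 → lp (fun _ : ℕ => 𝕜) 2}

theorem apply_one_eq_of_apply_eq_mul_pow (hf : ∀ z ∈ closedBall (0 : 𝕜) 1, ∀ n, f z n = b n * z ^ n)
    (n : ℕ) : f 1 n = b n := by
  simpa using hf 1 (by simp) n

theorem hasSum_norm_sq_apply_one
    (hf : ∀ z ∈ closedBall (0 : 𝕜) 1, ∀ n, f z n = b n * z ^ n) :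
    HasSum (fun n => ‖b n‖ ^ 2) (‖f 1‖ ^ 2) := by
  simpa using hasSum_norm_sq_of_apply_eq_mul_pow (z := 1) (hf 1 (by simp))

theorem continuousOn_of_apply_eq_mul_pow
    (hf : ∀ z ∈ closedBall (0 : 𝕜) 1, ∀ n, f z n = b n * z ^ n) :
    ContinuousOn f (closedBall 0 1) := by
  refine lp.continuousOn_of_norm_apply_le ENNReal.ofNat_ne_top (lp.memℓp (f 1)).norm
    (fun n => ?_) (fun z hz n => ?_)
  · exact (continuous_const.mul (continuous_pow n)).continuousOn.congr (hf · · n)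
  · rw [hf z hz, apply_one_eq_of_apply_eq_mul_pow hf, norm_mul, norm_pow]
    exact mul_le_of_le_one_right (norm_nonneg _)
      (pow_le_one₀ (norm_nonneg _) (mem_closedBall_zero_iff.1 hz))

theorem image_closedBall_subset_closedBall
    (hf : ∀ z ∈ closedBall (0 : 𝕜) 1, ∀ n, f z n = b n * z ^ n) :
    f '' closedBall 0 1 ⊆ closedBall 0 ‖f 1‖ := by
  rintro _ ⟨z, hz, rfl⟩
  exact mem_closedBall_zero_iff.2 <| norm_le_of_apply_eq_mul_pow
    (apply_one_eq_of_apply_eq_mul_pow hf) (hf z hz) (mem_closedBall_zero_iff.1 hz)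

theorem image_closedBall_eq_setOf (hb0 : b 0 = 0) (hb1 : b 1 ≠ 0)
    (hrad : ∀ x : ℝ, 1 < x → ¬ Summable (fun n => ‖b n‖ ^ 2 * x ^ n))
    (hf : ∀ z ∈ closedBall (0 : 𝕜) 1, ∀ n, f z n = b n * z ^ n) :
    f '' closedBall 0 1 = {w | w 0 = 0 ∧ ∀ n, 2 ≤ n → b n * w 1 ^ n = b 1 ^ n * w n} := by
  ext w
  constructor
  · rintro ⟨z, hz, rfl⟩
    refine ⟨by simp [hf z hz, hb0], fun n _ => ?_⟩
    rw [hf z hz 1, hf z hz n]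
    ring
  · rintro ⟨hw0, hw⟩
    have hwz := eq_mul_div_pow_of_mul_pow_eq hb0 hb1 hw0 hw
    have hz : w 1 / b 1 ∈ closedBall (0 : 𝕜) 1 :=
      mem_closedBall_zero_iff.2 (norm_le_one_of_apply_eq_mul_pow hrad hwz)
    exact ⟨_, hz, lp.ext (funext fun n => (hf _ hz n).trans (hwz n).symm)⟩

end ClosedDisc

theorem stmt10_general (b : ℕ → ℂ) (r : ℝ) (hb0 : b 0 = 0) (hb1 : b 1 ≠ 0)
    (hbr : ∑' n, ‖b n‖ ^ 2 = r ^ 2)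
    (hr0 : 0 ≤ r) (hr1 : r < 1)
    (hrad : ∀ x : ℝ, 1 < x → ¬ Summable (fun n => ‖b n‖ ^ 2 * x ^ n))
    (f : ℂ → lp (fun _ : ℕ => ℂ) 2)
    (hf : ∀ z ∈ closedBall (0 : ℂ) 1, ∀ n, f z n = b n * z ^ n) :
    f '' (closedBall 0 1) =
      {w : lp (fun _ : ℕ => ℂ) 2 |
        w 0 = 0 ∧ ∀ n, 2 ≤ n → b n * (w 1) ^ n = (b 1) ^ n * w n} ∧
    IsCompact (f '' (closedBall 0 1)) ∧
    f '' (closedBall 0 1) ⊆ ball 0 1 := by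
  have hnorm : ‖f 1‖ = r := by
    rw [(hasSum_norm_sq_apply_one hf).tsum_eq] at hbr
    exact (pow_left_inj₀ (norm_nonneg _) hr0 two_ne_zero).1 hbr
  exact ⟨image_closedBall_eq_setOf hb0 hb1 hrad hf,
    (isCompact_closedBall 0 1).image_of_continuousOn (continuousOn_of_apply_eq_mul_pow hf),
    (image_closedBall_subset_closedBall hf).trans (closedBall_subset_ball (hnorm ▸ hr1))⟩

/-- for `(b n) ∈ ℓ²` with `b 1 ≠ 0`, `‖b‖₂ = r < 1` (indexed from 1
via `b 0 = 0`), and `∑ |b n|² zⁿ` of radius of convergence exactly 1, the image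
of the *closed* disc under `f z = (b 1 z, b 2 z², …)` equals the full common zero
locus in `ℓ²` of the polynomials `b n z₁ⁿ - b 1ⁿ z_n` (`n ≥ 2`, plus `z₀ = 0`);
in particular this zero locus is a compact subset of the open unit ball of `ℓ²`. -/
theorem stmt10 (b : ℕ → ℂ) (r : ℝ) (hb0 : b 0 = 0) (hb1 : b 1 ≠ 0)
    (hb2 : Summable (fun n => ‖b n‖ ^ 2)) (hbr : ∑' n, ‖b n‖ ^ 2 = r ^ 2)
    (hr0 : 0 ≤ r) (hr1 : r < 1)
    (hrad : ∀ x : ℝ, 1 < x → ¬ Summable (fun n => ‖b n‖ ^ 2 * x ^ n))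
    (f : ℂ → lp (fun _ : ℕ => ℂ) 2)
    (hf : ∀ z ∈ closedBall (0 : ℂ) 1, ∀ n, f z n = b n * z ^ n) :
    f '' (closedBall 0 1) =
      {w : lp (fun _ : ℕ => ℂ) 2 |
        w 0 = 0 ∧ ∀ n, 2 ≤ n → b n * (w 1) ^ n = (b 1) ^ n * w n} ∧
    IsCompact (f '' (closedBall 0 1)) ∧
    f '' (closedBall 0 1) ⊆ ball 0 1 :=
  stmt10_general b r hb0 hb1 hbr hr0 hr1 hrad f hf
end

section
/- Let v_{n,k} = (1 - 2^{-n}) e^{i k 2^{-n}} for n ≥ 1 and 0 ≤ k < 2^{n/2}. Then the measure μ = Σ_{n,k} (1 - |v_{n,k}|) δ_{v_{n,k}} is not a Carleson measure: for the Carleson boxes S_p = {r e^{iθ} : 1 - 2^{-p} ≤ r < 1, 0 ≤ θ < 2^{-p}}, one has 2^p · μ(S_p) ≥ p + 1 for every p ≥ 1. -/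
/-!
For `0 ≤ j ≤ p` and `k < 2^j`, the point `v_{p+j,k}` has modulus `1 - 2^{-(p+j)} ≥ 1 - 2^{-p}` and
argument `k 2^{-(p+j)} < 2^{-p}`, so it lies in `S_p`; it is an admissible index because
`k² < 4^j ≤ 2^{p+j}`. Its mass is `2^{-(p+j)}`, so each of the `p + 1` levels `j` contributes
`2^j · 2^{-(p+j)} = 2^{-p}` to `μ(S_p)`.
-/

open MeasureTheory
open scoped ENNReal

/-- The points `v_{n,k} = (1 - 2^{-n}) e^{i k 2^{-n}}`. -/
noncomputable def vpt (q : ℕ × ℕ) : ℂ :=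
  (((1 : ℝ) - (2 : ℝ) ^ (-(q.1 : ℝ)) : ℝ) : ℂ) *
    Complex.exp (Complex.I * (q.2 : ℂ) * (((2 : ℝ) ^ (-(q.1 : ℝ)) : ℝ) : ℂ))

/-- The index set `n ≥ 1`, `0 ≤ k < 2^{n/2}` (encoded as `k² < 2ⁿ`). -/
def idx : Type := {q : ℕ × ℕ // 1 ≤ q.1 ∧ q.2 ^ 2 < 2 ^ q.1}

/-- The measure `μ = ∑_{n,k} (1 - |v_{n,k}|) δ_{v_{n,k}}`. -/
noncomputable def muV : Measure ℂ :=
  Measure.sum (fun q : idx => ENNReal.ofReal (1 - ‖vpt q.1‖) • Measure.dirac (vpt q.1))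

/-- The Carleson box `S_p = {r e^{iθ} : 1 - 2^{-p} ≤ r < 1, 0 ≤ θ < 2^{-p}}`. -/
def Sbox (p : ℕ) : Set ℂ :=
  {z | 1 - (2 : ℝ) ^ (-(p : ℝ)) ≤ ‖z‖ ∧ ‖z‖ < 1 ∧
       0 ≤ Complex.arg z ∧ Complex.arg z < (2 : ℝ) ^ (-(p : ℝ))}

theorem MeasureTheory.Measure.tsum_comp_le_sum_smul_dirac {α ι κ : Type*} [MeasurableSpace α]
    (w : ι → ℝ≥0∞) (x : ι → α) {s : Set α} {e : κ → ι} (he : Function.Injective e)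
    (hs : ∀ k, x (e k) ∈ s) :
    ∑' k, w (e k) ≤ Measure.sum (fun i => w i • Measure.dirac (x i)) s :=
  calc ∑' k, w (e k) = ∑' k, (w (e k) • Measure.dirac (x (e k))) s := by
        simp [Measure.dirac_apply_of_mem (hs _)]
    _ ≤ ∑' i, (w i • Measure.dirac (x i)) s :=
        ENNReal.tsum_comp_le_tsum_of_injective he (fun i => (w i • Measure.dirac (x i)) s)
    _ ≤ Measure.sum (fun i => w i • Measure.dirac (x i)) s := Measure.le_sum_apply _ _

lemma two_rpow_neg_natCast (n : ℕ) : (2 : ℝ) ^ (-(n : ℝ)) = ((2 : ℝ) ^ n)⁻¹ := by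
  rw [Real.rpow_neg zero_le_two, Real.rpow_natCast]

lemma vpt_eq (n k : ℕ) :
    vpt (n, k) = ((1 - ((2 : ℝ) ^ n)⁻¹ : ℝ) : ℂ) * Complex.exp ((k / 2 ^ n : ℝ) * Complex.I) := by
  simp only [vpt, two_rpow_neg_natCast]
  push_cast
  ring_nf

lemma norm_vpt (n k : ℕ) : ‖vpt (n, k)‖ = 1 - ((2 : ℝ) ^ n)⁻¹ := by
  have : ((2 : ℝ) ^ n)⁻¹ ≤ 1 := inv_le_one_of_one_le₀ (one_le_pow₀ one_le_two)
  rw [vpt_eq, norm_mul, Complex.norm_exp_ofReal_mul_I, mul_one, Complex.norm_real,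
    Real.norm_of_nonneg (by linarith)]

lemma arg_vpt {n k : ℕ} (hn : 1 ≤ n) (hk : k / (2 : ℝ) ^ n ≤ Real.pi) :
    Complex.arg (vpt (n, k)) = k / 2 ^ n := by
  have hr : 0 < 1 - ((2 : ℝ) ^ n)⁻¹ :=
    sub_pos.2 (inv_lt_one_of_one_lt₀ (one_lt_pow₀ one_lt_two (by omega)))
  have hk₀ : (0 : ℝ) ≤ k / 2 ^ n := by positivity
  rw [vpt_eq, Complex.arg_real_mul _ hr, Complex.exp_mul_I]
  exact Complex.arg_cos_add_sin_mul_I ⟨by linarith [Real.pi_pos], hk⟩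

lemma vpt_mem_Sbox {p j k : ℕ} (hp : 1 ≤ p) (hk : k < 2 ^ j) : vpt (p + j, k) ∈ Sbox p := by
  have hε : ((2 : ℝ) ^ (p + j))⁻¹ ≤ ((2 : ℝ) ^ p)⁻¹ :=
    inv_anti₀ (by positivity) (pow_le_pow_right₀ one_le_two (Nat.le_add_right p j))
  have hθ : (k : ℝ) / 2 ^ (p + j) < ((2 : ℝ) ^ p)⁻¹ := by
    rw [div_lt_iff₀ (by positivity), pow_add, inv_mul_cancel_left₀ (by positivity)]
    exact_mod_cast hk
  have hε₁ : ((2 : ℝ) ^ p)⁻¹ ≤ 1 := inv_le_one_of_one_le₀ (one_le_pow₀ one_le_two)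
  have hπ : (k : ℝ) / 2 ^ (p + j) ≤ Real.pi := by linarith [Real.pi_gt_three]
  simp only [Sbox, Set.mem_ofPred_eq, two_rpow_neg_natCast, norm_vpt,
    arg_vpt (by omega : 1 ≤ p + j) hπ]
  refine ⟨by linarith, by simp only [sub_lt_self_iff, inv_pos]; positivity, by positivity, hθ⟩

lemma ofReal_one_sub_norm_vpt (n k : ℕ) :
    ENNReal.ofReal (1 - ‖vpt (n, k)‖) = ((2 : ℝ≥0∞) ^ n)⁻¹ := by
  rw [norm_vpt, sub_sub_cancel, ENNReal.ofReal_inv_of_pos (by positivity),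
    ENNReal.ofReal_pow zero_le_two, ENNReal.ofReal_ofNat]

lemma sq_lt_two_pow_add {p j k : ℕ} (hj : j ≤ p) (hk : k < 2 ^ j) : k ^ 2 < 2 ^ (p + j) :=
  calc k ^ 2 < (2 ^ j) ^ 2 := Nat.pow_lt_pow_left hk two_ne_zero
    _ = 2 ^ (j + j) := by rw [← pow_mul, mul_two]
    _ ≤ 2 ^ (p + j) := Nat.pow_le_pow_right two_pos (by omega)

def boxIndex {p : ℕ} (hp : 1 ≤ p) (x : Σ j : Fin (p + 1), Fin (2 ^ (j : ℕ))) : idx :=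
  ⟨(p + x.1, x.2), by omega, sq_lt_two_pow_add (Nat.lt_succ_iff.1 x.1.2) x.2.2⟩

lemma boxIndex_injective {p : ℕ} (hp : 1 ≤ p) : Function.Injective (boxIndex hp) := by
  rintro ⟨j, k⟩ ⟨j', k'⟩ h
  obtain ⟨hj, hk⟩ := Prod.ext_iff.1 (congrArg Subtype.val h)
  simp only [boxIndex, Nat.add_left_cancel_iff] at hj hk
  obtain rfl : j = j' := Fin.ext hj
  obtain rfl : k = k' := Fin.ext hk
  rfl

lemma two_pow_mul_sum_sigma_inv_two_pow (p : ℕ) :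
    2 ^ p * ∑ x : Σ j : Fin (p + 1), Fin (2 ^ (j : ℕ)), ((2 : ℝ≥0∞) ^ (p + (x.1 : ℕ)))⁻¹ = p + 1 := by
  have hlevel (j : ℕ) : 2 ^ p * ((2 : ℝ≥0∞) ^ (p + j))⁻¹ = ((2 : ℝ≥0∞) ^ j)⁻¹ := by
    rw [pow_add, ENNReal.mul_inv (by simp) (by simp), ← mul_assoc,
      ENNReal.mul_inv_cancel (by simp) (by simp), one_mul]
  rw [Finset.mul_sum, ← Finset.univ_sigma_univ, Finset.sum_sigma]
  simp only [hlevel, Finset.sum_const, Finset.card_univ, Fintype.card_fin, nsmul_eq_mul]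
  simp [ENNReal.mul_inv_cancel]

/-- `μ` is not a Carleson measure: `2^p · μ(S_p) ≥ p + 1` for all `p ≥ 1`. -/
theorem stmt14 : ∀ p : ℕ, 1 ≤ p → ((p : ℝ≥0∞) + 1) ≤ 2 ^ p * muV (Sbox p) := by
  intro p hp
  calc ((p : ℝ≥0∞) + 1)
      = 2 ^ p * ∑' x, ENNReal.ofReal (1 - ‖vpt (boxIndex hp x).1‖) := by
        simp only [tsum_fintype, boxIndex, ofReal_one_sub_norm_vpt,
          two_pow_mul_sum_sigma_inv_two_pow]
    _ ≤ 2 ^ p * muV (Sbox p) := by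
        gcongr
        exact Measure.tsum_comp_le_sum_smul_dirac (fun q : idx => ENNReal.ofReal (1 - ‖vpt q.1‖))
          (fun q => vpt q.1) (boxIndex_injective hp)
          fun x => vpt_mem_Sbox hp x.2.2
end
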